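/- arXiv:2605.30890 — 2 statements merged into one kernel-verified Lean document; each statement's English description precedes it below -/
import Mathlib

section
/- Let M₀ = (m_{ij}) be a strictly positive n×n matrix with spectral radius < 1. Then the normalized feasible region Θ = {c ∈ ℝⁿ₊ : c₁ = 1, cᵀ(I - M₀) ≥ 0ᵀ} is a nonempty compact convex set; moreover for every c ∈ Θ and every j ≥ 2, one has m_{1j}/(1 - m_{jj}) ≤ c_j ≤ (1 - m_{11})/m_{j1}. -/
/-!
The column inequalities `c_t ≥ ∑ᵢ cᵢ m_{it}`, keeping only the terms `i = 1` and `i = j`, give both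
bounds; the region is closed and convex, and these bounds confine it to a box, so it is compact.
For nonemptiness, Gelfand's formula makes the Neumann series `S = ∑ M₀ᵏ` converge when the spectral
radius is `< 1`; then `S ≥ 0` and `S (I - M₀) = I`, so the normalized first row of `S` is feasible.
-/

open Matrix

/-- Spectral radius of a real square matrix: the supremum of the absolute values
of its complex eigenvalues. -/
noncomputable def specRad {n : ℕ} (M : Matrix (Fin n) (Fin n) ℝ) : ℝ :=
  sSup {r : ℝ | ∃ μ : ℂ, μ ∈ spectrum ℂ (M.map (algebraMap ℝ ℂ)) ∧ r = ‖μ‖}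

/-- Irreducibility of a nonnegative matrix: every entry communicates with
every other through some power. -/
def MatIrred {n : ℕ} (A : Matrix (Fin n) (Fin n) ℝ) : Prop :=
  ∀ i j, ∃ k : ℕ, 0 < k ∧ 0 < (A ^ k) i j

open Filter
open scoped ENNReal

section

variable {ι : Type*} [Fintype ι] [DecidableEq ι]

def feasibleRegion (M : Matrix ι ι ℝ) (i₀ : ι) : Set (ι → ℝ) :=
  {c | (∀ i, 0 ≤ c i) ∧ c i₀ = 1 ∧ ∀ j, 0 ≤ (c ᵥ* (1 - M)) j}

theorem vecMul_one_sub_apply (M : Matrix ι ι ℝ) (c : ι → ℝ) (j : ι) :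
    (c ᵥ* (1 - M)) j = c j - ∑ i, c i * M i j := by
  rw [vecMul_sub, vecMul_one]
  rfl

section
variable {M : Matrix ι ι ℝ} {i₀ : ι} {c : ι → ℝ}

theorem sum_mul_le_of_mem_feasibleRegion (hc : c ∈ feasibleRegion M i₀) (t : ι) :
    ∑ i, c i * M i t ≤ c t := by
  have := hc.2.2 t
  rw [vecMul_one_sub_apply] at this
  linarith

theorem add_mul_le_of_mem_feasibleRegion (hM : ∀ i j, 0 ≤ M i j) (hc : c ∈ feasibleRegion M i₀)
    {j : ι} (hj : j ≠ i₀) (t : ι) : M i₀ t + c j * M j t ≤ c t := by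
  calc M i₀ t + c j * M j t = ∑ i ∈ {i₀, j}, c i * M i t := by
        rw [Finset.sum_pair hj.symm, hc.2.1, one_mul]
    _ ≤ ∑ i, c i * M i t := Finset.sum_le_sum_of_subset_of_nonneg (Finset.subset_univ _)
        fun i _ _ => mul_nonneg (hc.1 i) (hM i t)
    _ ≤ c t := sum_mul_le_of_mem_feasibleRegion hc t

theorem mul_le_one_of_mem_feasibleRegion (hM : ∀ i j, 0 ≤ M i j) (hc : c ∈ feasibleRegion M i₀)
    (i : ι) : c i * M i i₀ ≤ 1 := by
  calc c i * M i i₀ ≤ ∑ k, c k * M k i₀ := Finset.single_le_sum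
        (fun k _ => mul_nonneg (hc.1 k) (hM k i₀)) (Finset.mem_univ i)
    _ ≤ 1 := hc.2.1 ▸ sum_mul_le_of_mem_feasibleRegion hc i₀

theorem div_le_of_mem_feasibleRegion (hM : ∀ i j, 0 ≤ M i j) (hc : c ∈ feasibleRegion M i₀)
    {j : ι} (hj : j ≠ i₀) (hpos : 0 < M i₀ j) : M i₀ j / (1 - M j j) ≤ c j := by
  have key := add_mul_le_of_mem_feasibleRegion hM hc hj j
  have hden : 0 < 1 - M j j := by nlinarith [hc.1 j]
  rw [div_le_iff₀ hden]
  linarith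

theorem le_div_of_mem_feasibleRegion (hM : ∀ i j, 0 ≤ M i j) (hc : c ∈ feasibleRegion M i₀)
    {j : ι} (hj : j ≠ i₀) (hpos : 0 < M j i₀) : c j ≤ (1 - M i₀ i₀) / M j i₀ := by
  have key := add_mul_le_of_mem_feasibleRegion hM hc hj i₀
  rw [hc.2.1] at key
  rw [le_div_iff₀ hpos]
  linarith

end

variable (M : Matrix ι ι ℝ) (i₀ : ι)

theorem convex_feasibleRegion : Convex ℝ (feasibleRegion M i₀) := by
  rintro x ⟨hx, hx₀, hxM⟩ y ⟨hy, hy₀, hyM⟩ a b ha hb hab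
  refine ⟨fun i => ?_, ?_, fun j => ?_⟩
  · have := hx i; have := hy i
    simp only [Pi.add_apply, Pi.smul_apply, smul_eq_mul]
    positivity
  · simp [hx₀, hy₀, hab]
  · have := hxM j; have := hyM j
    simp only [add_vecMul, smul_vecMul, Pi.add_apply, Pi.smul_apply, smul_eq_mul]
    positivity

theorem isClosed_feasibleRegion : IsClosed (feasibleRegion M i₀) := by
  simp only [feasibleRegion, Set.ofPred_and, Set.ofPred_forall]
  refine (isClosed_iInter fun i => isClosed_le continuous_const (continuous_apply i)).inter
    ((isClosed_eq (continuous_apply i₀) continuous_const).inter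
      (isClosed_iInter fun j => isClosed_le continuous_const ?_))
  fun_prop

theorem isCompact_feasibleRegion (hM : ∀ i j, 0 ≤ M i j) (hcol : ∀ i, 0 < M i i₀) :
    IsCompact (feasibleRegion M i₀) := by
  refine (isCompact_univ_pi fun i => isCompact_Icc (a := 0) (b := 1 / M i i₀)).of_isClosed_subset
    (isClosed_feasibleRegion M i₀) fun c hc i _ => ⟨hc.1 i, ?_⟩
  exact (le_div_iff₀ (hcol i)).mpr (mul_le_one_of_mem_feasibleRegion hM hc i)

theorem feasibleRegion_nonempty_of_mul_one_sub_eq_one {S : Matrix ι ι ℝ}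
    (hM : ∀ i j, 0 ≤ M i j) (hS : ∀ i j, 0 ≤ S i j) (hSM : S * (1 - M) = 1) :
    (feasibleRegion M i₀).Nonempty := by
  have hrow : S i₀ ᵥ* (1 - M) = (1 : Matrix ι ι ℝ) i₀ := congrFun hSM i₀
  have hdiag : 0 < S i₀ i₀ := by
    have := congrFun hrow i₀
    rw [vecMul_one_sub_apply, one_apply_eq] at this
    nlinarith [Finset.sum_nonneg fun k (_ : k ∈ Finset.univ) => mul_nonneg (hS i₀ k) (hM k i₀)]
  refine ⟨(S i₀ i₀)⁻¹ • S i₀, fun i => ?_, ?_, fun j => ?_⟩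
  · have := hS i₀ i; simp only [Pi.smul_apply, smul_eq_mul]; positivity
  · simp [hdiag.ne']
  · rw [smul_vecMul, hrow, Pi.smul_apply, smul_eq_mul, one_apply]
    positivity

end

theorem summable_pow_of_spectralRadius_lt_one {A : Type*} [NormedRing A] [NormedAlgebra ℂ A]
    [CompleteSpace A] {a : A} (ha : spectralRadius ℂ a < 1) : Summable (a ^ ·) := by
  obtain ⟨r, hρr, hr1⟩ := ENNReal.lt_iff_exists_nnreal_btwn.mp ha
  have hr1 : (r : ℝ) < 1 := mod_cast hr1
  refine Summable.of_norm_bounded_eventually_nat (summable_geometric_of_lt_one r.coe_nonneg hr1) ?_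
  have hgelfand := spectrum.pow_nnnorm_pow_one_div_tendsto_nhds_spectralRadius a
  filter_upwards [hgelfand.eventually_lt_const hρr, eventually_ge_atTop 1] with k hk hk1
  have hk0 : (k : ℝ) ≠ 0 := by positivity
  have : (‖a ^ k‖₊ : ℝ≥0∞) ≤ r ^ k := by
    calc (‖a ^ k‖₊ : ℝ≥0∞) = ((‖a ^ k‖₊ : ℝ≥0∞) ^ (1 / (k : ℝ))) ^ (k : ℝ) := by
          rw [← ENNReal.rpow_mul, one_div, inv_mul_cancel₀ hk0, ENNReal.rpow_one]
      _ ≤ (r : ℝ≥0∞) ^ (k : ℝ) := ENNReal.rpow_le_rpow hk.le (by positivity)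
      _ = r ^ k := ENNReal.rpow_natCast _ _
  exact_mod_cast this

section
open scoped Matrix.Norms.Operator

theorem spectralRadius_map_lt_one_of_specRad_lt_one {N : ℕ} [NeZero N]
    {M : Matrix (Fin N) (Fin N) ℝ} (hspec : specRad M < 1) :
    spectralRadius ℂ (M.map (algebraMap ℝ ℂ)) < 1 := by
  set σ := spectrum ℂ (M.map (algebraMap ℝ ℂ))
  have hbdd : BddAbove {r : ℝ | ∃ μ ∈ σ, r = ‖μ‖} := by
    simpa only [eq_comm, Set.image] using ((Matrix.finite_spectrum _).image (‖·‖)).bddAbove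
  exact mod_cast spectrum.spectralRadius_lt_of_forall_lt (r := 1) _ fun μ hμ =>
    mod_cast (le_csSup hbdd ⟨μ, hμ, rfl⟩).trans_lt hspec

theorem summable_pow_of_specRad_lt_one {N : ℕ} [NeZero N] {M : Matrix (Fin N) (Fin N) ℝ}
    (hspec : specRad M < 1) : Summable (M ^ ·) := by
  have hC := summable_pow_of_spectralRadius_lt_one
    (spectralRadius_map_lt_one_of_specRad_lt_one hspec)
  have := hC.map Complex.reAddGroupHom.mapMatrix
    (Continuous.matrix_map continuous_id Complex.continuous_re)
  -- the real powers are the entrywise real parts of the complexified ones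
  convert this using 2 with k
  rw [Function.comp_apply, ← RingHom.mapMatrix_apply, ← map_pow, RingHom.mapMatrix_apply,
    AddMonoidHom.mapMatrix_apply, Matrix.map_map]
  ext
  simp

end

theorem exists_nonneg_mul_one_sub_eq_one_of_specRad_lt_one {N : ℕ} [NeZero N]
    {M : Matrix (Fin N) (Fin N) ℝ} (hM : ∀ i j, 0 ≤ M i j) (hspec : specRad M < 1) :
    ∃ S : Matrix (Fin N) (Fin N) ℝ, (∀ i j, 0 ≤ S i j) ∧ S * (1 - M) = 1 := by
  have hsum := summable_pow_of_specRad_lt_one hspec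
  refine ⟨∑' k, M ^ k, fun i j => ?_, hsum.tsum_pow_mul_one_sub⟩
  have hrow : (∑' k, M ^ k) i = ∑' k, (M ^ k) i := tsum_apply hsum
  rw [hrow, tsum_apply (Pi.summable.mp hsum i)]
  exact tsum_nonneg fun k => pow_apply_nonneg hM k i j

theorem value_feasible_region_compact_convex {n : ℕ}
    (M : Matrix (Fin (n + 2)) (Fin (n + 2)) ℝ) (hM : ∀ i j, 0 < M i j)
    (hspec : specRad M < 1) :
    (Set.Nonempty {c : Fin (n + 2) → ℝ | (∀ i, 0 ≤ c i) ∧ c 0 = 1 ∧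
        ∀ j, 0 ≤ (c ᵥ* (1 - M)) j}) ∧
    IsCompact {c : Fin (n + 2) → ℝ | (∀ i, 0 ≤ c i) ∧ c 0 = 1 ∧
        ∀ j, 0 ≤ (c ᵥ* (1 - M)) j} ∧
    Convex ℝ {c : Fin (n + 2) → ℝ | (∀ i, 0 ≤ c i) ∧ c 0 = 1 ∧
        ∀ j, 0 ≤ (c ᵥ* (1 - M)) j} ∧
    ∀ c ∈ {c : Fin (n + 2) → ℝ | (∀ i, 0 ≤ c i) ∧ c 0 = 1 ∧
        ∀ j, 0 ≤ (c ᵥ* (1 - M)) j},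
      ∀ j : Fin (n + 2), j ≠ 0 →
        M 0 j / (1 - M j j) ≤ c j ∧ c j ≤ (1 - M 0 0) / M j 0 := by
  have hM₀ : ∀ i j, 0 ≤ M i j := fun i j => (hM i j).le
  obtain ⟨S, hS, hSM⟩ := exists_nonneg_mul_one_sub_eq_one_of_specRad_lt_one hM₀ hspec
  exact ⟨feasibleRegion_nonempty_of_mul_one_sub_eq_one M 0 hM₀ hS hSM,
    isCompact_feasibleRegion M 0 hM₀ fun i => hM i 0, convex_feasibleRegion M 0,
    fun c hc j hj => ⟨div_le_of_mem_feasibleRegion hM₀ hc hj (hM 0 j),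
      le_div_of_mem_feasibleRegion hM₀ hc hj (hM j 0)⟩⟩
end

section
/- With M(r) = L(I - à - rK)⁻¹ B under the standing assumptions (à irreducible nonnegative, K ≥ 0 nonzero, L positive diagonal, B ≥ 0 with no zero column), every entry of M(r) is strictly increasing in r on [0, r_A), and the spectral radius λ_max(M(r)) is strictly increasing in r. -/
open Matrix

/-!
For a nonnegative `M` with spectral radius below one, Gelfand's formula makes the entries of
`Mᵏ` decay geometrically, so `(1 - M)⁻¹ = ∑ₖ Mᵏ` entrywise. Since `Ã ≤ Ã + rK`, irreducibility of
`Ã` then makes the resolvent `X(r) = (1 - Ã - rK)⁻¹` entrywise positive, and the resolvent identity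
`X(r₂) - X(r₁) = X(r₂) ((r₂ - r₁) K) X(r₁)` with `0 ≤ K ≠ 0` gives `X(r₁) < X(r₂)` entrywise;
multiplying by `diag l` on the left and by `B` (no zero column) on the right keeps the strict
inequality.

For the spectral radius: the moduli of the entries of an eigenvector of a nonnegative `P` for an
eigenvalue of maximal modulus form a vector `w ≥ 0, w ≠ 0` with `ρ(P) w ≤ P w`. If `Q - P` is
entrywise positive, then `(ρ(P) + ε) w ≤ Q w` for some `ε > 0`, and the Collatz–Wielandt bound
(`c w ≤ Q w` forces `c ≤ ρ(Q)`, since otherwise `Qᵏ w / cᵏ → 0`) gives `ρ(P) < ρ(Q)`.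
-/

open Filter Finset Topology

namespace Matrix

section Nonneg

variable {ι R : Type*} [Fintype ι] [Semiring R] [PartialOrder R] [IsOrderedRing R]

theorem mulVec_mono {Q : Matrix ι ι R} (hQ : ∀ i j, 0 ≤ Q i j) {v w : ι → R} (hvw : v ≤ w) :
    Q *ᵥ v ≤ Q *ᵥ w :=
  fun i => sum_le_sum fun j _ => mul_le_mul_of_nonneg_left (hvw j) (hQ i j)

variable [DecidableEq ι]

theorem pow_apply_le_pow_apply {A M : Matrix ι ι R} (hA : ∀ i j, 0 ≤ A i j)
    (hAM : ∀ i j, A i j ≤ M i j) (k : ℕ) (i j : ι) : (A ^ k) i j ≤ (M ^ k) i j := by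
  induction k generalizing j with
  | zero => rfl
  | succ k ih =>
    simp only [pow_succ, mul_apply]
    exact sum_le_sum fun l _ =>
      mul_le_mul (ih l) (hAM l j) (hA l j) ((pow_apply_nonneg hA k i l).trans (ih l))

end Nonneg

theorem pow_smul_le_pow_mulVec {ι R : Type*} [Fintype ι] [DecidableEq ι] [CommSemiring R]
    [PartialOrder R] [IsOrderedRing R] {Q : Matrix ι ι R} (hQ : ∀ i j, 0 ≤ Q i j) {w : ι → R}
    {c : R} (hc : 0 ≤ c) (h : c • w ≤ Q *ᵥ w) (k : ℕ) : c ^ k • w ≤ Q ^ k *ᵥ w := by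
  induction k with
  | zero => simp
  | succ k ih =>
    calc c ^ (k + 1) • w = c ^ k • (c • w) := by rw [pow_succ, mul_smul]
      _ ≤ c ^ k • (Q *ᵥ w) := smul_le_smul_of_nonneg_left h (pow_nonneg hc k)
      _ = Q *ᵥ (c ^ k • w) := (mulVec_smul Q _ w).symm
      _ ≤ Q *ᵥ (Q ^ k *ᵥ w) := mulVec_mono hQ ih
      _ = Q ^ (k + 1) *ᵥ w := by rw [mulVec_mulVec, pow_succ']

section Positive

variable {l m n o R : Type*} [Semiring R] [PartialOrder R] [IsStrictOrderedRing R]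

theorem mul_mul_apply_pos [Fintype m] [Fintype n] {P : Matrix l m R} {D : Matrix m n R}
    {Q : Matrix n o R} (hP : ∀ i j, 0 < P i j) (hD : ∀ i j, 0 ≤ D i j) (hD0 : D ≠ 0) (hQ : ∀ i j, 0 < Q i j)
    (i : l) (j : o) : 0 < (P * D * Q) i j := by
  obtain ⟨a, b, hab⟩ : ∃ a b, 0 < D a b := by
    by_contra! h
    exact hD0 (Matrix.ext fun a b => ((hD a b).eq_of_not_lt (h a b)).symm)
  have hPD : 0 < (P * D) i b :=
    sum_pos' (fun k _ => mul_nonneg (hP i k).le (hD k b)) ⟨a, mem_univ a, mul_pos (hP i a) hab⟩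
  exact sum_pos' (fun k _ => mul_nonneg (sum_nonneg fun q _ => mul_nonneg (hP i q).le (hD q k))
    (hQ k j).le) ⟨b, mem_univ b, mul_pos hPD (hQ b j)⟩

theorem mul_apply_lt_mul_apply [Fintype m] {X Y : Matrix l m R} {B : Matrix m n R}
    (hXY : ∀ i j, X i j < Y i j) (hB : ∀ i j, 0 ≤ B i j) (hBcol : ∀ j, ∃ i, 0 < B i j)
    (i : l) (j : n) : (X * B) i j < (Y * B) i j := by
  obtain ⟨q, hq⟩ := hBcol j
  exact sum_lt_sum (fun k _ => mul_le_mul_of_nonneg_right (hXY i k).le (hB k j))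
    ⟨q, mem_univ q, mul_lt_mul_of_pos_right (hXY i q) hq⟩

theorem diagonal_mul_mul_apply_lt [Fintype l] [Fintype m] [DecidableEq l] {d : l → R}
    {X Y : Matrix l m R} {B : Matrix m n R} (hd : ∀ i, 0 < d i) (hXY : ∀ i j, X i j < Y i j)
    (hB : ∀ i j, 0 ≤ B i j) (hBcol : ∀ j, ∃ i, 0 < B i j) (i : l) (j : n) :
    (diagonal d * X * B) i j < (diagonal d * Y * B) i j := by
  simp only [Matrix.mul_assoc, diagonal_mul]
  exact mul_lt_mul_of_pos_left (mul_apply_lt_mul_apply hXY hB hBcol i j) (hd i)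

end Positive

section LinftyOp

attribute [local instance] Matrix.linftyOpSeminormedAddCommGroup

theorem norm_apply_le_linfty_opNorm {α m n : Type*} [SeminormedAddCommGroup α] [Fintype m]
    [Fintype n] (N : Matrix m n α) (i : m) (j : n) : ‖N i j‖ ≤ ‖N‖ := by
  rw [← coe_nnnorm, ← coe_nnnorm, NNReal.coe_le_coe, linfty_opNNNorm_def]
  exact (single_le_sum (fun _ _ => zero_le) (mem_univ j)).trans
    (le_sup (f := fun i => ∑ j, ‖N i j‖₊) (mem_univ i))

end LinftyOp

end Matrix

theorem exists_pos_smul_le {ι : Type*} [Finite ι] (u v : ι → ℝ) (hv : ∀ i, 0 < v i) :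
    ∃ ε : ℝ, 0 < ε ∧ ε • u ≤ v := by
  have hsmall : ∀ i, ∀ᶠ ε in 𝓝 (0 : ℝ), ε * u i < v i := fun i =>
    ((continuous_mul_const (u i)).tendsto' 0 0 (zero_mul _)).eventually_lt_const (hv i)
  obtain ⟨ε, hεu, hε⟩ :=
    (((eventually_all.2 hsmall).filter_mono nhdsWithin_le_nhds).and
      (self_mem_nhdsWithin (s := Set.Ioi 0))).exists
  exact ⟨ε, hε, fun i => (hεu i).le⟩

section SpectralRadius

attribute [local instance] Matrix.linftyOpNormedRing Matrix.linftyOpNormedAlgebra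

variable {n : ℕ}

theorem specRad_eq_sSup_image (M : Matrix (Fin n) (Fin n) ℝ) :
    specRad M = sSup ((‖·‖) '' spectrum ℂ (M.map (algebraMap ℝ ℂ))) := by
  simp only [specRad, Set.image, eq_comm]

theorem norm_le_specRad {M : Matrix (Fin n) (Fin n) ℝ} {μ : ℂ}
    (hμ : μ ∈ spectrum ℂ (M.map (algebraMap ℝ ℂ))) : ‖μ‖ ≤ specRad M := by
  rw [specRad_eq_sSup_image]
  exact le_csSup ((Matrix.finite_spectrum _).image _).bddAbove ⟨μ, hμ, rfl⟩

theorem exists_norm_eq_specRad [Nonempty (Fin n)] (M : Matrix (Fin n) (Fin n) ℝ) :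
    ∃ μ ∈ spectrum ℂ (M.map (algebraMap ℝ ℂ)), ‖μ‖ = specRad M := by
  rw [specRad_eq_sSup_image]
  exact ((spectrum.nonempty _).image _).csSup_mem ((Matrix.finite_spectrum _).image _)

theorem specRad_nonneg [Nonempty (Fin n)] (M : Matrix (Fin n) (Fin n) ℝ) : 0 ≤ specRad M := by
  obtain ⟨μ, -, hμ⟩ := exists_norm_eq_specRad M
  exact hμ ▸ norm_nonneg μ

theorem isUnit_det_one_sub_of_specRad_lt_one {M : Matrix (Fin n) (Fin n) ℝ}
    (h : specRad M < 1) : IsUnit (1 - M).det := by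
  have h1 : (1 : ℂ) ∉ spectrum ℂ (M.map (algebraMap ℝ ℂ)) := fun hmem =>
    (norm_le_specRad hmem).not_gt (by simpa using h)
  have hdet : (1 - M.map (algebraMap ℝ ℂ)).det = algebraMap ℝ ℂ (1 - M).det := by
    rw [RingHom.map_det, map_sub, map_one, RingHom.mapMatrix_apply]
  rw [spectrum.notMem_iff, map_one, isUnit_iff_isUnit_det, hdet] at h1
  exact (isUnit_map_iff _ _).1 h1

theorem tendsto_pow_apply_div_pow_of_specRad_lt {M : Matrix (Fin n) (Fin n) ℝ} {θ : ℝ}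
    (hθ : specRad M < θ) (i j : Fin n) :
    Tendsto (fun k => (M ^ k) i j / θ ^ k) atTop (𝓝 0) := by
  have : Nonempty (Fin n) := ⟨i⟩
  obtain ⟨θ', hMθ', hθ'θ⟩ := exists_between hθ
  have hθ' : 0 < θ' := (specRad_nonneg M).trans_lt hMθ'
  have hspec : spectralRadius ℂ (M.map (algebraMap ℝ ℂ)) < ENNReal.ofReal θ' :=
    spectrum.spectralRadius_lt_of_forall_lt _ fun z hz => by
      rw [← NNReal.coe_lt_coe, Real.coe_toNNReal _ hθ'.le, coe_nnnorm]
      exact (norm_le_specRad hz).trans_lt hMθ'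
  have hpow : ∀ᶠ k in atTop, |(M ^ k) i j| ≤ θ' ^ k := by
    have hgelfand := spectrum.pow_norm_pow_one_div_tendsto_nhds_spectralRadius
      (M.map (algebraMap ℝ ℂ))
    filter_upwards [hgelfand.eventually_lt_const hspec, eventually_gt_atTop 0] with k hk hk0
    rw [ENNReal.ofReal_lt_ofReal_iff hθ', one_div,
      Real.rpow_inv_lt_iff_of_pos (norm_nonneg _) hθ'.le (by positivity), Real.rpow_natCast] at hk
    calc |(M ^ k) i j| = ‖((M.map (algebraMap ℝ ℂ)) ^ k) i j‖ := by
          rw [← Matrix.map_pow, map_apply, Complex.coe_algebraMap, Complex.norm_real,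
            Real.norm_eq_abs]
      _ ≤ θ' ^ k := (norm_apply_le_linfty_opNorm _ i j).trans hk.le
  have hθ0 : 0 < θ := hθ'.trans hθ'θ
  refine squeeze_zero_norm' ?_ (tendsto_pow_atTop_nhds_zero_of_lt_one (div_pos hθ' hθ0).le
    ((div_lt_one hθ0).2 hθ'θ))
  filter_upwards [hpow] with k hk
  rw [norm_div, norm_pow, Real.norm_eq_abs, Real.norm_eq_abs, abs_of_pos hθ0, div_pow]
  gcongr

end SpectralRadius

section Resolvent

variable {n : ℕ}

theorem pow_apply_le_inv_one_sub_apply {M : Matrix (Fin n) (Fin n) ℝ}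
    (hM : ∀ i j, 0 ≤ M i j) (h : specRad M < 1) (k : ℕ) (i j : Fin n) :
    (M ^ k) i j ≤ (1 - M)⁻¹ i j := by
  have hpartial : ∀ N, ∑ k ∈ range N, M ^ k = (1 - M)⁻¹ - M ^ N * (1 - M)⁻¹ := fun N => by
    rw [← one_sub_mul, ← geom_sum_mul_neg, mul_assoc,
      mul_nonsing_inv _ (isUnit_det_one_sub_of_specRad_lt_one h), mul_one]
  have htail : Tendsto (fun N => (M ^ N * (1 - M)⁻¹) i j) atTop (𝓝 0) := by
    simpa [mul_apply] using tendsto_finsetSum univ fun q _ =>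
      (tendsto_pow_apply_div_pow_of_specRad_lt h i q).mul_const ((1 - M)⁻¹ q j)
  have hX : HasSum (fun k => (M ^ k) i j) ((1 - M)⁻¹ i j) := by
    rw [hasSum_iff_tendsto_nat_of_nonneg (fun k => pow_apply_nonneg hM k i j)]
    simpa [← Matrix.sum_apply, hpartial] using tendsto_const_nhds.sub htail
  exact le_hasSum hX k fun l _ => pow_apply_nonneg hM l i j

theorem inv_one_sub_apply_pos {A M : Matrix (Fin n) (Fin n) ℝ} (hA : ∀ i j, 0 ≤ A i j)
    (hAirr : MatIrred A) (hAM : ∀ i j, A i j ≤ M i j) (h : specRad M < 1) (i j : Fin n) :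
    0 < (1 - M)⁻¹ i j := by
  obtain ⟨k, -, hk⟩ := hAirr i j
  exact hk.trans_le <| (pow_apply_le_pow_apply hA hAM k i j).trans <|
    pow_apply_le_inv_one_sub_apply (fun p q => (hA p q).trans (hAM p q)) h k i j

/-- By the resolvent identity `(1 - M₂)⁻¹ - (1 - M₁)⁻¹ = (1 - M₂)⁻¹ (M₂ - M₁) (1 - M₁)⁻¹`,
whose outer factors are entrywise positive. -/
theorem inv_one_sub_apply_lt_inv_one_sub_apply {A M₁ M₂ : Matrix (Fin n) (Fin n) ℝ}
    (hA : ∀ i j, 0 ≤ A i j) (hAirr : MatIrred A) (hAM : ∀ i j, A i j ≤ M₁ i j)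
    (hM : ∀ i j, M₁ i j ≤ M₂ i j) (hne : M₁ ≠ M₂) (h₁ : specRad M₁ < 1) (h₂ : specRad M₂ < 1)
    (i j : Fin n) : (1 - M₁)⁻¹ i j < (1 - M₂)⁻¹ i j := by
  have hunit : IsUnit (1 - M₂) ↔ IsUnit (1 - M₁) := by
    simp only [isUnit_iff_isUnit_det, isUnit_det_one_sub_of_specRad_lt_one, h₁, h₂]
  rw [← sub_pos, ← Matrix.sub_apply, inv_sub_inv hunit, sub_sub_sub_cancel_left]
  exact mul_mul_apply_pos
    (inv_one_sub_apply_pos hA hAirr (fun p q => (hAM p q).trans (hM p q)) h₂)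
    (fun p q => sub_nonneg.2 (hM p q)) (sub_ne_zero.2 hne.symm)
    (inv_one_sub_apply_pos hA hAirr hAM h₁) i j

end Resolvent

section CollatzWielandt

variable {n : ℕ}

theorem exists_specRad_smul_le_mulVec [Nonempty (Fin n)] {P : Matrix (Fin n) (Fin n) ℝ}
    (hP : ∀ i j, 0 ≤ P i j) : ∃ w : Fin n → ℝ, 0 < w ∧ specRad P • w ≤ P *ᵥ w := by
  obtain ⟨μ, hμ, hμP⟩ := exists_norm_eq_specRad P
  rw [← Matrix.spectrum_toLin', ← Module.End.hasEigenvalue_iff_mem_spectrum] at hμ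
  obtain ⟨v, hv⟩ := hμ.exists_hasEigenvector
  have hPv : P.map (algebraMap ℝ ℂ) *ᵥ v = μ • v := by simpa using hv.apply_eq_smul
  refine ⟨fun i => ‖v i‖, Pi.lt_def.2 ⟨fun i => norm_nonneg _, ?_⟩, fun i => ?_⟩
  · obtain ⟨i, hi⟩ := Function.ne_iff.1 hv.2
    exact ⟨i, norm_pos_iff.2 hi⟩
  · calc specRad P * ‖v i‖ = ‖(P.map (algebraMap ℝ ℂ) *ᵥ v) i‖ := by
          rw [hPv, Pi.smul_apply, smul_eq_mul, norm_mul, hμP]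
      _ ≤ ∑ j, ‖P.map (algebraMap ℝ ℂ) i j * v j‖ :=
          norm_sum_le univ fun j => P.map (algebraMap ℝ ℂ) i j * v j
      _ = (P *ᵥ fun j => ‖v j‖) i := by simp [mulVec, dotProduct, abs_of_nonneg (hP _ _)]

theorem le_specRad_of_smul_le_mulVec {Q : Matrix (Fin n) (Fin n) ℝ} (hQ : ∀ i j, 0 ≤ Q i j)
    {w : Fin n → ℝ} (hw : 0 < w) {c : ℝ} (h : c • w ≤ Q *ᵥ w) : c ≤ specRad Q := by
  obtain ⟨-, i₀, hi₀⟩ := Pi.lt_def.1 hw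
  have : Nonempty (Fin n) := ⟨i₀⟩
  by_contra! hlt
  have hc : 0 < c := (specRad_nonneg Q).trans_lt hlt
  have hlim : Tendsto (fun k => (Q ^ k *ᵥ w) i₀ / c ^ k) atTop (𝓝 0) := by
    simpa [mulVec, dotProduct, sum_div, div_mul_eq_mul_div] using tendsto_finsetSum univ
      fun j _ => (tendsto_pow_apply_div_pow_of_specRad_lt hlt i₀ j).mul_const (w j)
  have hbound : ∀ k, w i₀ ≤ (Q ^ k *ᵥ w) i₀ / c ^ k := fun k => by
    rw [le_div_iff₀' (pow_pos hc k)]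
    exact pow_smul_le_pow_mulVec hQ hc.le h k i₀
  exact hi₀.not_ge (ge_of_tendsto' hlim hbound)

theorem specRad_lt_specRad [Nonempty (Fin n)] {P Q : Matrix (Fin n) (Fin n) ℝ}
    (hP : ∀ i j, 0 ≤ P i j) (hPQ : ∀ i j, P i j < Q i j) : specRad P < specRad Q := by
  obtain ⟨w, hw, hPw⟩ := exists_specRad_smul_le_mulVec hP
  obtain ⟨hw0, i₀, hi₀⟩ := Pi.lt_def.1 hw
  have hgap : ∀ i, 0 < ((Q - P) *ᵥ w) i := fun i =>
    sum_pos' (fun j _ => mul_nonneg (sub_nonneg.2 (hPQ i j).le) (hw0 j))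
      ⟨i₀, mem_univ _, mul_pos (sub_pos.2 (hPQ i i₀)) hi₀⟩
  obtain ⟨ε, hε, hεw⟩ := exists_pos_smul_le w _ hgap
  refine (lt_add_of_pos_right (specRad P) hε).trans_le
    (le_specRad_of_smul_le_mulVec (fun i j => (hP i j).trans (hPQ i j).le) hw ?_)
  calc (specRad P + ε) • w = specRad P • w + ε • w := add_smul _ _ _
    _ ≤ P *ᵥ w + (Q - P) *ᵥ w := add_le_add hPw hεw
    _ = Q *ᵥ w := by rw [← add_mulVec, add_sub_cancel]

end CollatzWielandt

theorem M_r_strictly_increasing {n : ℕ}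
    (A K B : Matrix (Fin n) (Fin n) ℝ) (l : Fin n → ℝ)
    (hA0 : ∀ i j, 0 ≤ A i j) (hAirr : MatIrred A)
    (hK0 : ∀ i j, 0 ≤ K i j) (hKne : K ≠ 0)
    (hl : ∀ j, 0 < l j)
    (hB0 : ∀ i j, 0 ≤ B i j) (hBcol : ∀ j, ∃ i, 0 < B i j)
    (rA : ℝ) (hspec : ∀ r, 0 ≤ r → r < rA → specRad (A + r • K) < 1)
    (r₁ r₂ : ℝ) (h1 : 0 ≤ r₁) (h12 : r₁ < r₂) (h2 : r₂ < rA) :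
    (∀ i j, (Matrix.diagonal l * (1 - (A + r₁ • K))⁻¹ * B) i j <
            (Matrix.diagonal l * (1 - (A + r₂ • K))⁻¹ * B) i j) ∧
    specRad (Matrix.diagonal l * (1 - (A + r₁ • K))⁻¹ * B) <
      specRad (Matrix.diagonal l * (1 - (A + r₂ • K))⁻¹ * B) := by
  have : Nonempty (Fin n) := by
    contrapose! hKne
    exact Subsingleton.elim _ _
  have hs₁ : specRad (A + r₁ • K) < 1 := hspec r₁ h1 (h12.trans h2)
  have hs₂ : specRad (A + r₂ • K) < 1 := hspec r₂ (h1.trans h12.le) h2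
  have hAM₁ : ∀ i j, A i j ≤ (A + r₁ • K) i j := fun i j =>
    le_add_of_nonneg_right (mul_nonneg h1 (hK0 i j))
  have hM : ∀ i j, (A + r₁ • K) i j ≤ (A + r₂ • K) i j := fun i j =>
    add_le_add le_rfl (mul_le_mul_of_nonneg_right h12.le (hK0 i j))
  have hne : A + r₁ • K ≠ A + r₂ • K := fun h =>
    h12.ne (smul_left_injective ℝ hKne (add_left_cancel h))
  have hX := inv_one_sub_apply_lt_inv_one_sub_apply hA0 hAirr hAM₁ hM hne hs₁ hs₂
  have hlt := diagonal_mul_mul_apply_lt hl hX hB0 hBcol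
  refine ⟨hlt, specRad_lt_specRad (fun i j => ?_) hlt⟩
  -- nonnegativity on the left is the comparison with `X = 0`
  simpa using (diagonal_mul_mul_apply_lt (X := 0) hl (inv_one_sub_apply_pos hA0 hAirr hAM₁ hs₁)
    hB0 hBcol i j).le
end
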